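/- arXiv:1912.04752 — 4 statements merged into one kernel-verified Lean document; each statement's English description precedes it below -/
import Mathlib

section
/- For every real number n > 2 and all real parameters x, y, z, x₁, y₁, the row vector v ∈ ℝ¹⁶ with entries v₁ = x, v₂ = −x/(n−2), v₃ = x/3 − y₁, v₄ = x/6, v₅ = −x, v₆ = −2x/(n−2), v₇ = −x/6 − x₁/2 − y₁, v₈ = −x, v₉ = y, v₁₀ = (x₁ + y + z)/2, v₁₁ = (2y + z)/2 − y₁, v₁₂ = −6(y+z)/(n−2) + 12y₁/(n−2), v₁₃ = z, v₁₄ = z − 2y₁, v₁₅ = −y₁, v₁₆ = x₁/2 + y₁ is a left null vector of the matrix 𝒞(n), i.e. vᵀ · 𝒞(n) = 0. -/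
set_option maxHeartbeats 2000000


/-- The 16×12 coefficient matrix 𝒞(n) built from the blocks M₁(n) and M₂(n):
rows 1–8 are (rᵢ, 0,0,0,0) for i = 1,…,8; rows 9–14 are (0,…,0, sⱼ) for j = 1,…,6;
row 15 is (r₉, s₇); row 16 is (r₁₀, s₈). -/
noncomputable def Ccal (n : ℝ) : Matrix (Fin 16) (Fin 12) ℝ :=
  !![1, 0, 0, 0, 0, 0, 0, 0, 0, 0, 0, 0;
     0, 3*(n-2)/(n-1), 0, 0, 0, -(9/2)*(n-2), 0, 0, 0, 0, 0, 0;
     -2, -3*(n-4)/(n-1), 0, 2, 3, -(3/2)*(n+8), 3, 0, 0, 0, 0, 0;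
     0, 0, 1, 0, 0, 0, 0, 0, 0, 0, 0, 0;
     0, 0, 0, 1, 0, 0, 0, 0, 0, 0, 0, 0;
     0, 0, 0, 0, 0, 0, 0, 1, 0, 0, 0, 0;
     2, -6, 1, -2, 0, -3*(n-1), 6, -12/(n-2), 0, 0, 0, 0;
     0, 0, 0, 0, 1, 0, 0, 0, 0, 0, 0, 0;
     0, 0, 0, 0, 0, 0, 0, 0, 1, 0, 0, 0;
     0, 0, 0, 0, 0, 0, 0, 0, -2, 0, -2, 12/(n-2);
     0, 0, 0, 0, 0, 0, 0, 0, 0, 0, 1, 0;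
     0, 0, 0, 0, 0, 0, 0, 0, 0, 0, 0, 1;
     0, 0, 0, 0, 0, 0, 0, 0, 1, -1, 1/2, 0;
     0, 0, 0, 0, 0, 0, 0, 0, 0, 1, 0, 0;
     2, 3*(n-4)/(n-1), 0, -2, -3, (3/2)*(n+8), -3, 0, 2, -2, 1, 0;
     2, -6, 1, -2, 0, -3*(n-1), 6, -12/(n-2), 2, 0, 2, -12/(n-2)]

/-- For every real `n > 2` and all real parameters `x, y, z, x₁, y₁`, the indicated
16-component row vector is a left null vector of the matrix `𝒞(n)`. -/
theorem left_null_vector_of_Ccal (n x y z x₁ y₁ : ℝ) (hn : n > 2) :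
    Matrix.vecMul
      ![x, -x/(n-2), x/3 - y₁, x/6, -x, -2*x/(n-2), -x/6 - x₁/2 - y₁, -x,
        y, (x₁ + y + z)/2, (2*y + z)/2 - y₁, -6*(y+z)/(n-2) + 12*y₁/(n-2),
        z, z - 2*y₁, -y₁, x₁/2 + y₁]
      (Ccal n) = 0 := by
  have h2 : n - 2 ≠ 0 := by linarith
  have h1 : n - 1 ≠ 0 := by linarith
  funext j
  fin_cases j <;>
  · simp only [Ccal, Matrix.vecMul, dotProduct, Fin.sum_univ_succ,
      Fin.sum_univ_zero, Matrix.cons_val_zero, Matrix.cons_val_one, Matrix.head_cons,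
      Matrix.cons_val_succ, Matrix.of_apply, Matrix.cons_val', Matrix.empty_val',
      Matrix.cons_val_fin_one, Matrix.head_fin_const, Pi.zero_apply, add_zero,
      Fin.isValue, Fin.mk_zero, Fin.mk_one, Fin.reduceFinMk, Matrix.cons_val]
    field_simp
    ring
end

section
/- For every real number n > 2, the left null space {v ∈ ℝ¹⁶ : vᵀ · 𝒞(n) = 0} of the matrix 𝒞(n) has dimension exactly 5 (equivalently, 𝒞(n) has rank 11). -/
private lemma QQfmk12_0 (h : 0 < 12) : (⟨0, h⟩ : Fin 12) = 0 := rfl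
private lemma QQfmk12_1 (h : 1 < 12) : (⟨1, h⟩ : Fin 12) = 1 := rfl
private lemma QQfmk12_2 (h : 2 < 12) : (⟨2, h⟩ : Fin 12) = 2 := rfl
private lemma QQfmk12_3 (h : 3 < 12) : (⟨3, h⟩ : Fin 12) = 3 := rfl
private lemma QQfmk12_4 (h : 4 < 12) : (⟨4, h⟩ : Fin 12) = 4 := rfl
private lemma QQfmk12_5 (h : 5 < 12) : (⟨5, h⟩ : Fin 12) = 5 := rfl
private lemma QQfmk12_6 (h : 6 < 12) : (⟨6, h⟩ : Fin 12) = 6 := rfl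
private lemma QQfmk12_7 (h : 7 < 12) : (⟨7, h⟩ : Fin 12) = 7 := rfl
private lemma QQfmk12_8 (h : 8 < 12) : (⟨8, h⟩ : Fin 12) = 8 := rfl
private lemma QQfmk12_9 (h : 9 < 12) : (⟨9, h⟩ : Fin 12) = 9 := rfl
private lemma QQfmk12_10 (h : 10 < 12) : (⟨10, h⟩ : Fin 12) = 10 := rfl
private lemma QQfmk12_11 (h : 11 < 12) : (⟨11, h⟩ : Fin 12) = 11 := rfl
private lemma QQfmk16_0 (h : 0 < 16) : (⟨0, h⟩ : Fin 16) = 0 := rfl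
private lemma QQfmk16_1 (h : 1 < 16) : (⟨1, h⟩ : Fin 16) = 1 := rfl
private lemma QQfmk16_2 (h : 2 < 16) : (⟨2, h⟩ : Fin 16) = 2 := rfl
private lemma QQfmk16_3 (h : 3 < 16) : (⟨3, h⟩ : Fin 16) = 3 := rfl
private lemma QQfmk16_4 (h : 4 < 16) : (⟨4, h⟩ : Fin 16) = 4 := rfl
private lemma QQfmk16_5 (h : 5 < 16) : (⟨5, h⟩ : Fin 16) = 5 := rfl
private lemma QQfmk16_6 (h : 6 < 16) : (⟨6, h⟩ : Fin 16) = 6 := rfl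
private lemma QQfmk16_7 (h : 7 < 16) : (⟨7, h⟩ : Fin 16) = 7 := rfl
private lemma QQfmk16_8 (h : 8 < 16) : (⟨8, h⟩ : Fin 16) = 8 := rfl
private lemma QQfmk16_9 (h : 9 < 16) : (⟨9, h⟩ : Fin 16) = 9 := rfl
private lemma QQfmk16_10 (h : 10 < 16) : (⟨10, h⟩ : Fin 16) = 10 := rfl
private lemma QQfmk16_11 (h : 11 < 16) : (⟨11, h⟩ : Fin 16) = 11 := rfl
private lemma QQfmk16_12 (h : 12 < 16) : (⟨12, h⟩ : Fin 16) = 12 := rfl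
private lemma QQfmk16_13 (h : 13 < 16) : (⟨13, h⟩ : Fin 16) = 13 := rfl
private lemma QQfmk16_14 (h : 14 < 16) : (⟨14, h⟩ : Fin 16) = 14 := rfl
private lemma QQfmk16_15 (h : 15 < 16) : (⟨15, h⟩ : Fin 16) = 15 := rfl
private lemma QQcv12_0 (a0 a1 a2 a3 a4 a5 a6 a7 a8 a9 a10 a11 : ℝ) : (![a0,a1,a2,a3,a4,a5,a6,a7,a8,a9,a10,a11] : Fin 12 → ℝ) 0 = a0 := rfl
private lemma QQcv12_1 (a0 a1 a2 a3 a4 a5 a6 a7 a8 a9 a10 a11 : ℝ) : (![a0,a1,a2,a3,a4,a5,a6,a7,a8,a9,a10,a11] : Fin 12 → ℝ) 1 = a1 := rfl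
private lemma QQcv12_2 (a0 a1 a2 a3 a4 a5 a6 a7 a8 a9 a10 a11 : ℝ) : (![a0,a1,a2,a3,a4,a5,a6,a7,a8,a9,a10,a11] : Fin 12 → ℝ) 2 = a2 := rfl
private lemma QQcv12_3 (a0 a1 a2 a3 a4 a5 a6 a7 a8 a9 a10 a11 : ℝ) : (![a0,a1,a2,a3,a4,a5,a6,a7,a8,a9,a10,a11] : Fin 12 → ℝ) 3 = a3 := rfl
private lemma QQcv12_4 (a0 a1 a2 a3 a4 a5 a6 a7 a8 a9 a10 a11 : ℝ) : (![a0,a1,a2,a3,a4,a5,a6,a7,a8,a9,a10,a11] : Fin 12 → ℝ) 4 = a4 := rfl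
private lemma QQcv12_5 (a0 a1 a2 a3 a4 a5 a6 a7 a8 a9 a10 a11 : ℝ) : (![a0,a1,a2,a3,a4,a5,a6,a7,a8,a9,a10,a11] : Fin 12 → ℝ) 5 = a5 := rfl
private lemma QQcv12_6 (a0 a1 a2 a3 a4 a5 a6 a7 a8 a9 a10 a11 : ℝ) : (![a0,a1,a2,a3,a4,a5,a6,a7,a8,a9,a10,a11] : Fin 12 → ℝ) 6 = a6 := rfl
private lemma QQcv12_7 (a0 a1 a2 a3 a4 a5 a6 a7 a8 a9 a10 a11 : ℝ) : (![a0,a1,a2,a3,a4,a5,a6,a7,a8,a9,a10,a11] : Fin 12 → ℝ) 7 = a7 := rfl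
private lemma QQcv12_8 (a0 a1 a2 a3 a4 a5 a6 a7 a8 a9 a10 a11 : ℝ) : (![a0,a1,a2,a3,a4,a5,a6,a7,a8,a9,a10,a11] : Fin 12 → ℝ) 8 = a8 := rfl
private lemma QQcv12_9 (a0 a1 a2 a3 a4 a5 a6 a7 a8 a9 a10 a11 : ℝ) : (![a0,a1,a2,a3,a4,a5,a6,a7,a8,a9,a10,a11] : Fin 12 → ℝ) 9 = a9 := rfl
private lemma QQcv12_10 (a0 a1 a2 a3 a4 a5 a6 a7 a8 a9 a10 a11 : ℝ) : (![a0,a1,a2,a3,a4,a5,a6,a7,a8,a9,a10,a11] : Fin 12 → ℝ) 10 = a10 := rfl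
private lemma QQcv12_11 (a0 a1 a2 a3 a4 a5 a6 a7 a8 a9 a10 a11 : ℝ) : (![a0,a1,a2,a3,a4,a5,a6,a7,a8,a9,a10,a11] : Fin 12 → ℝ) 11 = a11 := rfl
private lemma QQcv16_0 (a0 a1 a2 a3 a4 a5 a6 a7 a8 a9 a10 a11 a12 a13 a14 a15 : ℝ) : (![a0,a1,a2,a3,a4,a5,a6,a7,a8,a9,a10,a11,a12,a13,a14,a15] : Fin 16 → ℝ) 0 = a0 := rfl
private lemma QQcv16_1 (a0 a1 a2 a3 a4 a5 a6 a7 a8 a9 a10 a11 a12 a13 a14 a15 : ℝ) : (![a0,a1,a2,a3,a4,a5,a6,a7,a8,a9,a10,a11,a12,a13,a14,a15] : Fin 16 → ℝ) 1 = a1 := rfl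
private lemma QQcv16_2 (a0 a1 a2 a3 a4 a5 a6 a7 a8 a9 a10 a11 a12 a13 a14 a15 : ℝ) : (![a0,a1,a2,a3,a4,a5,a6,a7,a8,a9,a10,a11,a12,a13,a14,a15] : Fin 16 → ℝ) 2 = a2 := rfl
private lemma QQcv16_3 (a0 a1 a2 a3 a4 a5 a6 a7 a8 a9 a10 a11 a12 a13 a14 a15 : ℝ) : (![a0,a1,a2,a3,a4,a5,a6,a7,a8,a9,a10,a11,a12,a13,a14,a15] : Fin 16 → ℝ) 3 = a3 := rfl
private lemma QQcv16_4 (a0 a1 a2 a3 a4 a5 a6 a7 a8 a9 a10 a11 a12 a13 a14 a15 : ℝ) : (![a0,a1,a2,a3,a4,a5,a6,a7,a8,a9,a10,a11,a12,a13,a14,a15] : Fin 16 → ℝ) 4 = a4 := rfl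
private lemma QQcv16_5 (a0 a1 a2 a3 a4 a5 a6 a7 a8 a9 a10 a11 a12 a13 a14 a15 : ℝ) : (![a0,a1,a2,a3,a4,a5,a6,a7,a8,a9,a10,a11,a12,a13,a14,a15] : Fin 16 → ℝ) 5 = a5 := rfl
private lemma QQcv16_6 (a0 a1 a2 a3 a4 a5 a6 a7 a8 a9 a10 a11 a12 a13 a14 a15 : ℝ) : (![a0,a1,a2,a3,a4,a5,a6,a7,a8,a9,a10,a11,a12,a13,a14,a15] : Fin 16 → ℝ) 6 = a6 := rfl
private lemma QQcv16_7 (a0 a1 a2 a3 a4 a5 a6 a7 a8 a9 a10 a11 a12 a13 a14 a15 : ℝ) : (![a0,a1,a2,a3,a4,a5,a6,a7,a8,a9,a10,a11,a12,a13,a14,a15] : Fin 16 → ℝ) 7 = a7 := rfl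
private lemma QQcv16_8 (a0 a1 a2 a3 a4 a5 a6 a7 a8 a9 a10 a11 a12 a13 a14 a15 : ℝ) : (![a0,a1,a2,a3,a4,a5,a6,a7,a8,a9,a10,a11,a12,a13,a14,a15] : Fin 16 → ℝ) 8 = a8 := rfl
private lemma QQcv16_9 (a0 a1 a2 a3 a4 a5 a6 a7 a8 a9 a10 a11 a12 a13 a14 a15 : ℝ) : (![a0,a1,a2,a3,a4,a5,a6,a7,a8,a9,a10,a11,a12,a13,a14,a15] : Fin 16 → ℝ) 9 = a9 := rfl
private lemma QQcv16_10 (a0 a1 a2 a3 a4 a5 a6 a7 a8 a9 a10 a11 a12 a13 a14 a15 : ℝ) : (![a0,a1,a2,a3,a4,a5,a6,a7,a8,a9,a10,a11,a12,a13,a14,a15] : Fin 16 → ℝ) 10 = a10 := rfl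
private lemma QQcv16_11 (a0 a1 a2 a3 a4 a5 a6 a7 a8 a9 a10 a11 a12 a13 a14 a15 : ℝ) : (![a0,a1,a2,a3,a4,a5,a6,a7,a8,a9,a10,a11,a12,a13,a14,a15] : Fin 16 → ℝ) 11 = a11 := rfl
private lemma QQcv16_12 (a0 a1 a2 a3 a4 a5 a6 a7 a8 a9 a10 a11 a12 a13 a14 a15 : ℝ) : (![a0,a1,a2,a3,a4,a5,a6,a7,a8,a9,a10,a11,a12,a13,a14,a15] : Fin 16 → ℝ) 12 = a12 := rfl
private lemma QQcv16_13 (a0 a1 a2 a3 a4 a5 a6 a7 a8 a9 a10 a11 a12 a13 a14 a15 : ℝ) : (![a0,a1,a2,a3,a4,a5,a6,a7,a8,a9,a10,a11,a12,a13,a14,a15] : Fin 16 → ℝ) 13 = a13 := rfl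
private lemma QQcv16_14 (a0 a1 a2 a3 a4 a5 a6 a7 a8 a9 a10 a11 a12 a13 a14 a15 : ℝ) : (![a0,a1,a2,a3,a4,a5,a6,a7,a8,a9,a10,a11,a12,a13,a14,a15] : Fin 16 → ℝ) 14 = a14 := rfl
private lemma QQcv16_15 (a0 a1 a2 a3 a4 a5 a6 a7 a8 a9 a10 a11 a12 a13 a14 a15 : ℝ) : (![a0,a1,a2,a3,a4,a5,a6,a7,a8,a9,a10,a11,a12,a13,a14,a15] : Fin 16 → ℝ) 15 = a15 := rfl
private lemma QQval2_0 : ((0 : Fin 2) : ℕ) = 0 := rfl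
private lemma QQval2_1 : ((1 : Fin 2) : ℕ) = 1 := rfl
private lemma QQval3_0 : ((0 : Fin 3) : ℕ) = 0 := rfl
private lemma QQval3_1 : ((1 : Fin 3) : ℕ) = 1 := rfl
private lemma QQval3_2 : ((2 : Fin 3) : ℕ) = 2 := rfl
private lemma QQval4_0 : ((0 : Fin 4) : ℕ) = 0 := rfl
private lemma QQval4_1 : ((1 : Fin 4) : ℕ) = 1 := rfl
private lemma QQval4_2 : ((2 : Fin 4) : ℕ) = 2 := rfl
private lemma QQval4_3 : ((3 : Fin 4) : ℕ) = 3 := rfl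
private lemma QQval5_0 : ((0 : Fin 5) : ℕ) = 0 := rfl
private lemma QQval5_1 : ((1 : Fin 5) : ℕ) = 1 := rfl
private lemma QQval5_2 : ((2 : Fin 5) : ℕ) = 2 := rfl
private lemma QQval5_3 : ((3 : Fin 5) : ℕ) = 3 := rfl
private lemma QQval5_4 : ((4 : Fin 5) : ℕ) = 4 := rfl
private lemma QQval6_0 : ((0 : Fin 6) : ℕ) = 0 := rfl
private lemma QQval6_1 : ((1 : Fin 6) : ℕ) = 1 := rfl
private lemma QQval6_2 : ((2 : Fin 6) : ℕ) = 2 := rfl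
private lemma QQval6_3 : ((3 : Fin 6) : ℕ) = 3 := rfl
private lemma QQval6_4 : ((4 : Fin 6) : ℕ) = 4 := rfl
private lemma QQval6_5 : ((5 : Fin 6) : ℕ) = 5 := rfl
private lemma QQval7_0 : ((0 : Fin 7) : ℕ) = 0 := rfl
private lemma QQval7_1 : ((1 : Fin 7) : ℕ) = 1 := rfl
private lemma QQval7_2 : ((2 : Fin 7) : ℕ) = 2 := rfl
private lemma QQval7_3 : ((3 : Fin 7) : ℕ) = 3 := rfl
private lemma QQval7_4 : ((4 : Fin 7) : ℕ) = 4 := rfl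
private lemma QQval7_5 : ((5 : Fin 7) : ℕ) = 5 := rfl
private lemma QQval7_6 : ((6 : Fin 7) : ℕ) = 6 := rfl
private lemma QQval8_0 : ((0 : Fin 8) : ℕ) = 0 := rfl
private lemma QQval8_1 : ((1 : Fin 8) : ℕ) = 1 := rfl
private lemma QQval8_2 : ((2 : Fin 8) : ℕ) = 2 := rfl
private lemma QQval8_3 : ((3 : Fin 8) : ℕ) = 3 := rfl
private lemma QQval8_4 : ((4 : Fin 8) : ℕ) = 4 := rfl
private lemma QQval8_5 : ((5 : Fin 8) : ℕ) = 5 := rfl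
private lemma QQval8_6 : ((6 : Fin 8) : ℕ) = 6 := rfl
private lemma QQval8_7 : ((7 : Fin 8) : ℕ) = 7 := rfl
private lemma QQval9_0 : ((0 : Fin 9) : ℕ) = 0 := rfl
private lemma QQval9_1 : ((1 : Fin 9) : ℕ) = 1 := rfl
private lemma QQval9_2 : ((2 : Fin 9) : ℕ) = 2 := rfl
private lemma QQval9_3 : ((3 : Fin 9) : ℕ) = 3 := rfl
private lemma QQval9_4 : ((4 : Fin 9) : ℕ) = 4 := rfl
private lemma QQval9_5 : ((5 : Fin 9) : ℕ) = 5 := rfl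
private lemma QQval9_6 : ((6 : Fin 9) : ℕ) = 6 := rfl
private lemma QQval9_7 : ((7 : Fin 9) : ℕ) = 7 := rfl
private lemma QQval9_8 : ((8 : Fin 9) : ℕ) = 8 := rfl
private lemma QQval10_0 : ((0 : Fin 10) : ℕ) = 0 := rfl
private lemma QQval10_1 : ((1 : Fin 10) : ℕ) = 1 := rfl
private lemma QQval10_2 : ((2 : Fin 10) : ℕ) = 2 := rfl
private lemma QQval10_3 : ((3 : Fin 10) : ℕ) = 3 := rfl
private lemma QQval10_4 : ((4 : Fin 10) : ℕ) = 4 := rfl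
private lemma QQval10_5 : ((5 : Fin 10) : ℕ) = 5 := rfl
private lemma QQval10_6 : ((6 : Fin 10) : ℕ) = 6 := rfl
private lemma QQval10_7 : ((7 : Fin 10) : ℕ) = 7 := rfl
private lemma QQval10_8 : ((8 : Fin 10) : ℕ) = 8 := rfl
private lemma QQval10_9 : ((9 : Fin 10) : ℕ) = 9 := rfl
private lemma QQval11_0 : ((0 : Fin 11) : ℕ) = 0 := rfl
private lemma QQval11_1 : ((1 : Fin 11) : ℕ) = 1 := rfl
private lemma QQval11_2 : ((2 : Fin 11) : ℕ) = 2 := rfl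
private lemma QQval11_3 : ((3 : Fin 11) : ℕ) = 3 := rfl
private lemma QQval11_4 : ((4 : Fin 11) : ℕ) = 4 := rfl
private lemma QQval11_5 : ((5 : Fin 11) : ℕ) = 5 := rfl
private lemma QQval11_6 : ((6 : Fin 11) : ℕ) = 6 := rfl
private lemma QQval11_7 : ((7 : Fin 11) : ℕ) = 7 := rfl
private lemma QQval11_8 : ((8 : Fin 11) : ℕ) = 8 := rfl
private lemma QQval11_9 : ((9 : Fin 11) : ℕ) = 9 := rfl
private lemma QQval11_10 : ((10 : Fin 11) : ℕ) = 10 := rfl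
private lemma QQval12_0 : ((0 : Fin 12) : ℕ) = 0 := rfl
private lemma QQval12_1 : ((1 : Fin 12) : ℕ) = 1 := rfl
private lemma QQval12_2 : ((2 : Fin 12) : ℕ) = 2 := rfl
private lemma QQval12_3 : ((3 : Fin 12) : ℕ) = 3 := rfl
private lemma QQval12_4 : ((4 : Fin 12) : ℕ) = 4 := rfl
private lemma QQval12_5 : ((5 : Fin 12) : ℕ) = 5 := rfl
private lemma QQval12_6 : ((6 : Fin 12) : ℕ) = 6 := rfl
private lemma QQval12_7 : ((7 : Fin 12) : ℕ) = 7 := rfl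
private lemma QQval12_8 : ((8 : Fin 12) : ℕ) = 8 := rfl
private lemma QQval12_9 : ((9 : Fin 12) : ℕ) = 9 := rfl
private lemma QQval12_10 : ((10 : Fin 12) : ℕ) = 10 := rfl
private lemma QQval12_11 : ((11 : Fin 12) : ℕ) = 11 := rfl
private lemma QQval13_0 : ((0 : Fin 13) : ℕ) = 0 := rfl
private lemma QQval13_1 : ((1 : Fin 13) : ℕ) = 1 := rfl
private lemma QQval13_2 : ((2 : Fin 13) : ℕ) = 2 := rfl
private lemma QQval13_3 : ((3 : Fin 13) : ℕ) = 3 := rfl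
private lemma QQval13_4 : ((4 : Fin 13) : ℕ) = 4 := rfl
private lemma QQval13_5 : ((5 : Fin 13) : ℕ) = 5 := rfl
private lemma QQval13_6 : ((6 : Fin 13) : ℕ) = 6 := rfl
private lemma QQval13_7 : ((7 : Fin 13) : ℕ) = 7 := rfl
private lemma QQval13_8 : ((8 : Fin 13) : ℕ) = 8 := rfl
private lemma QQval13_9 : ((9 : Fin 13) : ℕ) = 9 := rfl
private lemma QQval13_10 : ((10 : Fin 13) : ℕ) = 10 := rfl
private lemma QQval13_11 : ((11 : Fin 13) : ℕ) = 11 := rfl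
private lemma QQval13_12 : ((12 : Fin 13) : ℕ) = 12 := rfl
private lemma QQval14_0 : ((0 : Fin 14) : ℕ) = 0 := rfl
private lemma QQval14_1 : ((1 : Fin 14) : ℕ) = 1 := rfl
private lemma QQval14_2 : ((2 : Fin 14) : ℕ) = 2 := rfl
private lemma QQval14_3 : ((3 : Fin 14) : ℕ) = 3 := rfl
private lemma QQval14_4 : ((4 : Fin 14) : ℕ) = 4 := rfl
private lemma QQval14_5 : ((5 : Fin 14) : ℕ) = 5 := rfl
private lemma QQval14_6 : ((6 : Fin 14) : ℕ) = 6 := rfl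
private lemma QQval14_7 : ((7 : Fin 14) : ℕ) = 7 := rfl
private lemma QQval14_8 : ((8 : Fin 14) : ℕ) = 8 := rfl
private lemma QQval14_9 : ((9 : Fin 14) : ℕ) = 9 := rfl
private lemma QQval14_10 : ((10 : Fin 14) : ℕ) = 10 := rfl
private lemma QQval14_11 : ((11 : Fin 14) : ℕ) = 11 := rfl
private lemma QQval14_12 : ((12 : Fin 14) : ℕ) = 12 := rfl
private lemma QQval14_13 : ((13 : Fin 14) : ℕ) = 13 := rfl
private lemma QQval15_0 : ((0 : Fin 15) : ℕ) = 0 := rfl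
private lemma QQval15_1 : ((1 : Fin 15) : ℕ) = 1 := rfl
private lemma QQval15_2 : ((2 : Fin 15) : ℕ) = 2 := rfl
private lemma QQval15_3 : ((3 : Fin 15) : ℕ) = 3 := rfl
private lemma QQval15_4 : ((4 : Fin 15) : ℕ) = 4 := rfl
private lemma QQval15_5 : ((5 : Fin 15) : ℕ) = 5 := rfl
private lemma QQval15_6 : ((6 : Fin 15) : ℕ) = 6 := rfl
private lemma QQval15_7 : ((7 : Fin 15) : ℕ) = 7 := rfl
private lemma QQval15_8 : ((8 : Fin 15) : ℕ) = 8 := rfl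
private lemma QQval15_9 : ((9 : Fin 15) : ℕ) = 9 := rfl
private lemma QQval15_10 : ((10 : Fin 15) : ℕ) = 10 := rfl
private lemma QQval15_11 : ((11 : Fin 15) : ℕ) = 11 := rfl
private lemma QQval15_12 : ((12 : Fin 15) : ℕ) = 12 := rfl
private lemma QQval15_13 : ((13 : Fin 15) : ℕ) = 13 := rfl
private lemma QQval15_14 : ((14 : Fin 15) : ℕ) = 14 := rfl
private lemma QQval16_0 : ((0 : Fin 16) : ℕ) = 0 := rfl
private lemma QQval16_1 : ((1 : Fin 16) : ℕ) = 1 := rfl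
private lemma QQval16_2 : ((2 : Fin 16) : ℕ) = 2 := rfl
private lemma QQval16_3 : ((3 : Fin 16) : ℕ) = 3 := rfl
private lemma QQval16_4 : ((4 : Fin 16) : ℕ) = 4 := rfl
private lemma QQval16_5 : ((5 : Fin 16) : ℕ) = 5 := rfl
private lemma QQval16_6 : ((6 : Fin 16) : ℕ) = 6 := rfl
private lemma QQval16_7 : ((7 : Fin 16) : ℕ) = 7 := rfl
private lemma QQval16_8 : ((8 : Fin 16) : ℕ) = 8 := rfl
private lemma QQval16_9 : ((9 : Fin 16) : ℕ) = 9 := rfl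
private lemma QQval16_10 : ((10 : Fin 16) : ℕ) = 10 := rfl
private lemma QQval16_11 : ((11 : Fin 16) : ℕ) = 11 := rfl
private lemma QQval16_12 : ((12 : Fin 16) : ℕ) = 12 := rfl
private lemma QQval16_13 : ((13 : Fin 16) : ℕ) = 13 := rfl
private lemma QQval16_14 : ((14 : Fin 16) : ℕ) = 14 := rfl
private lemma QQval16_15 : ((15 : Fin 16) : ℕ) = 15 := rfl
private lemma QQfmk5_0 (h : 0 < 5) : (⟨0, h⟩ : Fin 5) = 0 := rfl
private lemma QQfmk5_1 (h : 1 < 5) : (⟨1, h⟩ : Fin 5) = 1 := rfl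
private lemma QQfmk5_2 (h : 2 < 5) : (⟨2, h⟩ : Fin 5) = 2 := rfl
private lemma QQfmk5_3 (h : 3 < 5) : (⟨3, h⟩ : Fin 5) = 3 := rfl
private lemma QQfmk5_4 (h : 4 < 5) : (⟨4, h⟩ : Fin 5) = 4 := rfl


noncomputable def QQW (n : ℝ) : Fin 5 → (Fin 16 → ℝ) :=
  ![![-1, 1/(n-2), -1/3, -1/6, 1, 2/(n-2), 1/6, 1, 0, 0, 0, 0, 0, 0, 0, 0],
    ![0, 0, 0, 0, 0, 0, 0, 0, -(n-2)/6, -(n-2)/12, -(n-2)/6, 1, 0, 0, 0, 0],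
    ![0, 0, 0, 0, 0, 0, 0, 0, -1, 0, -1/2, 0, 1, 1, 0, 0],
    ![0, 0, 1, 0, 0, 0, 0, 0, 0, 0, 0, 0, -2, 0, 1, 0],
    ![0, 0, 0, 0, 0, 0, -1, 0, 0, 1, 0, 0, 0, 0, 0, 1]]

set_option maxHeartbeats 2000000 in
private lemma QQW_mem (n : ℝ) (hn : n > 2) (i : Fin 5) :
    QQW n i ∈ LinearMap.ker (Matrix.vecMulLinear (Ccal n)) := by
  have h2 : n - 2 ≠ 0 := by linarith
  have h1 : n - 1 ≠ 0 := by linarith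
  rw [LinearMap.mem_ker, Matrix.vecMulLinear_apply]
  funext j
  fin_cases i <;> fin_cases j <;>
    simp [Matrix.vecMul, dotProduct, Fin.sum_univ_succ, Ccal, QQW,
      QQfmk16_0, QQfmk16_1, QQfmk16_2, QQfmk16_3, QQfmk16_4, QQfmk16_5, QQfmk16_6, QQfmk16_7, QQfmk16_8, QQfmk16_9, QQfmk16_10, QQfmk16_11, QQfmk16_12, QQfmk16_13, QQfmk16_14, QQfmk16_15, QQfmk12_0, QQfmk12_1, QQfmk12_2, QQfmk12_3, QQfmk12_4, QQfmk12_5, QQfmk12_6, QQfmk12_7, QQfmk12_8, QQfmk12_9, QQfmk12_10, QQfmk12_11, QQcv16_0, QQcv16_1, QQcv16_2, QQcv16_3, QQcv16_4, QQcv16_5, QQcv16_6, QQcv16_7, QQcv16_8, QQcv16_9, QQcv16_10, QQcv16_11, QQcv16_12, QQcv16_13, QQcv16_14, QQcv16_15, QQcv12_0, QQcv12_1, QQcv12_2, QQcv12_3, QQcv12_4, QQcv12_5, QQcv12_6, QQcv12_7, QQcv12_8, QQcv12_9, QQcv12_10, QQcv12_11] <;>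
    field_simp <;> ring

set_option maxHeartbeats 2000000 in
private lemma QQker_le (n : ℝ) (hn : n > 2) :
    LinearMap.ker (Matrix.vecMulLinear (Ccal n)) ≤ Submodule.span ℝ (Set.range (QQW n)) := by
  have hn2 : n - 2 ≠ 0 := by linarith
  have hn1 : n - 1 ≠ 0 := by linarith
  intro v hv
  rw [LinearMap.mem_ker, Matrix.vecMulLinear_apply] at hv
  have h0 := congrFun hv 0
  have h2 := congrFun hv 2
  have h3 := congrFun hv 3
  have h4 := congrFun hv 4
  have h5 := congrFun hv 5
  have h6 := congrFun hv 6
  have h7 := congrFun hv 7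
  have h8 := congrFun hv 8
  have h9 := congrFun hv 9
  have h10 := congrFun hv 10
  have h11 := congrFun hv 11
  simp [Matrix.vecMul, dotProduct, Fin.sum_univ_succ, Ccal,
      QQfmk16_0, QQfmk16_1, QQfmk16_2, QQfmk16_3, QQfmk16_4, QQfmk16_5, QQfmk16_6, QQfmk16_7, QQfmk16_8, QQfmk16_9, QQfmk16_10, QQfmk16_11, QQfmk16_12, QQfmk16_13, QQfmk16_14, QQfmk16_15, QQfmk12_0, QQfmk12_1, QQfmk12_2, QQfmk12_3, QQfmk12_4, QQfmk12_5, QQfmk12_6, QQfmk12_7, QQfmk12_8, QQfmk12_9, QQfmk12_10, QQfmk12_11, QQcv16_0, QQcv16_1, QQcv16_2, QQcv16_3, QQcv16_4, QQcv16_5, QQcv16_6, QQcv16_7, QQcv16_8, QQcv16_9, QQcv16_10, QQcv16_11, QQcv16_12, QQcv16_13, QQcv16_14, QQcv16_15, QQcv12_0, QQcv12_1, QQcv12_2, QQcv12_3, QQcv12_4, QQcv12_5, QQcv12_6, QQcv12_7, QQcv12_8, QQcv12_9, QQcv12_10, QQcv12_11, Pi.zero_apply] at h0 h2 h3 h4 h5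 h6 h7 h8 h9 h10 h11
  norm_num [Fin.succ, QQval2_0, QQval2_1, QQval3_0, QQval3_1, QQval3_2, QQval4_0, QQval4_1, QQval4_2, QQval4_3, QQval5_0, QQval5_1, QQval5_2, QQval5_3, QQval5_4, QQval6_0, QQval6_1, QQval6_2, QQval6_3, QQval6_4, QQval6_5, QQval7_0, QQval7_1, QQval7_2, QQval7_3, QQval7_4, QQval7_5, QQval7_6, QQval8_0, QQval8_1, QQval8_2, QQval8_3, QQval8_4, QQval8_5, QQval8_6, QQval8_7, QQval9_0, QQval9_1, QQval9_2, QQval9_3, QQval9_4, QQval9_5, QQval9_6, QQval9_7, QQval9_8, QQval10_0, QQval10_1, QQval10_2, QQval10_3, QQval10_4, QQval10_5, QQval10_6, QQval10_7, QQval10_8, QQval10_9, QQval11_0, QQval11_1, QQval11_2, QQval11_3, QQval11_4, QQval11_5, QQval11_6, QQval11_7, QQval11_8, QQval11_9, QQval11_10, QQval12_0, QQval12_1, QQval12_2, QQval12_3, QQval12_4, QQval12_5, QQval12_6, QQval12_7, QQval12_8, QQval12_9, QQval12_10, QQval12_11, QQval13_0, QQval13_1, QQval13_2, QQval13_3, QQval13_4,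 QQval13_5, QQval13_6, QQval13_7, QQval13_8, QQval13_9, QQval13_10, QQval13_11, QQval13_12, QQval14_0, QQval14_1, QQval14_2, QQval14_3, QQval14_4, QQval14_5, QQval14_6, QQval14_7, QQval14_8, QQval14_9, QQval14_10, QQval14_11, QQval14_12, QQval14_13, QQval15_0, QQval15_1, QQval15_2, QQval15_3, QQval15_4, QQval15_5, QQval15_6, QQval15_7, QQval15_8, QQval15_9, QQval15_10, QQval15_11, QQval15_12, QQval15_13, QQval15_14, QQval16_0, QQval16_1, QQval16_2, QQval16_3, QQval16_4, QQval16_5, QQval16_6, QQval16_7, QQval16_8, QQval16_9, QQval16_10, QQval16_11, QQval16_12, QQval16_13, QQval16_14, QQval16_15, QQfmk16_0, QQfmk16_1, QQfmk16_2, QQfmk16_3, QQfmk16_4, QQfmk16_5, QQfmk16_6, QQfmk16_7, QQfmk16_8, QQfmk16_9, QQfmk16_10, QQfmk16_11, QQfmk16_12, QQfmk16_13, QQfmk16_14, QQfmk16_15, QQfmk12_0, QQfmk12_1, QQfmk12_2, QQfmk12_3, QQfmk12_4, QQfmk12_5, QQfmk12_6, QQfmk12_7, QQfmk12_8, QQfmk12_9,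 QQfmk12_10, QQfmk12_11] at h0 h2 h3 h4 h5 h6 h7 h8 h9 h10 h11
  field_simp at h7 h11
  have hA : v 2 = v 14 - v 7/3 := by linarith
  have hB : v 6 = v 7/6 - v 15 := by linarith
  have hC : v 3 = -(v 7)/6 := by linarith
  have hD : v 0 = -(v 7) := by linarith
  have hE : v 4 = v 7 := by linarith
  have hF : v 5 * (n-2) = 2 * v 7 := by
    apply mul_right_cancel₀ hn2
    linear_combination (n-2)*h7 + 12*(n-2)*hB
  have hG : v 1 * (n-2) = v 7 := by
    linear_combination (-2/9)*h5 + (-(n+8)/3)*hA + (-(2/3)*(n-1))*hB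
  have hH : v 12 = v 13 - 2*v 14 := by linarith
  have hI : 12 * v 9 = 12 * v 15 - (n-2)*v 11 := by
    linear_combination h11
  have hJ : 6 * v 8 = -((n-2)*v 11) - 6*v 13 := by
    linear_combination 6*h8 + hI - 6*hH
  have hK : 6 * v 10 = -((n-2)*v 11) - 3*v 13 := by
    linear_combination 6*h10 + hI - 3*hH
  have hrep : v = v 7 • QQW n 0 + v 11 • QQW n 1 + v 13 • QQW n 2
      + v 14 • QQW n 3 + v 15 • QQW n 4 := by
    funext i
    simp only [Pi.add_apply, Pi.smul_apply, smul_eq_mul]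
    fin_cases i <;>
      (try simp [QQW, Matrix.vecHead, Matrix.vecTail, QQfmk16_0, QQfmk16_1, QQfmk16_2, QQfmk16_3, QQfmk16_4, QQfmk16_5, QQfmk16_6, QQfmk16_7, QQfmk16_8, QQfmk16_9, QQfmk16_10, QQfmk16_11, QQfmk16_12, QQfmk16_13, QQfmk16_14, QQfmk16_15, QQcv16_0, QQcv16_1, QQcv16_2, QQcv16_3, QQcv16_4, QQcv16_5, QQcv16_6, QQcv16_7, QQcv16_8, QQcv16_9, QQcv16_10, QQcv16_11, QQcv16_12, QQcv16_13, QQcv16_14, QQcv16_15]) <;>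
      first
      | rfl
      | linarith [hA, hB, hC, hD, hE, hH]
      | (field_simp; linear_combination hG)
      | (field_simp; linear_combination hF)
      | (field_simp; linear_combination hI)
      | (field_simp; linear_combination hJ)
      | (field_simp; linear_combination hK)
      | (field_simp; linear_combination v 7 * hG)
      | (field_simp; linear_combination v 7 * hF)
  rw [hrep]
  have mem : ∀ i : Fin 5, QQW n i ∈ Submodule.span ℝ (Set.range (QQW n)) :=
    fun i => Submodule.subset_span ⟨i, rfl⟩
  exact Submodule.add_mem _ (Submodule.add_mem _ (Submodule.add_mem _ (Submodule.add_mem _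
    (Submodule.smul_mem _ _ (mem 0)) (Submodule.smul_mem _ _ (mem 1)))
    (Submodule.smul_mem _ _ (mem 2))) (Submodule.smul_mem _ _ (mem 3)))
    (Submodule.smul_mem _ _ (mem 4))

private lemma QQW_indep (n : ℝ) (hn : n > 2) : LinearIndependent ℝ (QQW n) := by
  rw [Fintype.linearIndependent_iff]
  intro g hg i
  have c7 := congrFun hg 7
  have c11 := congrFun hg 11
  have c13 := congrFun hg 13
  have c14 := congrFun hg 14
  have c15 := congrFun hg 15
  simp [Fin.sum_univ_five, QQW, Matrix.vecHead, Matrix.vecTail, QQfmk16_0, QQfmk16_1, QQfmk16_2, QQfmk16_3, QQfmk16_4, QQfmk16_5, QQfmk16_6, QQfmk16_7, QQfmk16_8, QQfmk16_9, QQfmk16_10, QQfmk16_11, QQfmk16_12, QQfmk16_13, QQfmk16_14, QQfmk16_15, QQcv16_0, QQcv16_1, QQcv16_2, QQcv16_3, QQcv16_4, QQcv16_5, QQcv16_6, QQcv16_7, QQcv16_8, QQcv16_9, QQcv16_10, QQcv16_11, QQcv16_12, QQcv16_13, QQcv16_14, QQcv16_15] at c7 c11 c13 c14 c15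
  fin_cases i <;> simp [QQfmk5_0, QQfmk5_1, QQfmk5_2, QQfmk5_3, QQfmk5_4] <;> linarith

/-- For every real `n > 2`, the left null space of `𝒞(n)` has dimension exactly 5
(equivalently, `𝒞(n)` has rank 11). -/
theorem left_null_space_of_Ccal_dim_five (n : ℝ) (hn : n > 2) :
    Module.finrank ℝ (LinearMap.ker (Matrix.vecMulLinear (Ccal n))) = 5 := by
  have hspan : LinearMap.ker (Matrix.vecMulLinear (Ccal n))
      = Submodule.span ℝ (Set.range (QQW n)) := by
    apply le_antisymm (QQker_le n hn)
    rw [Submodule.span_le]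
    rintro x ⟨i, rfl⟩
    exact QQW_mem n hn i
  rw [hspan, finrank_span_eq_card (QQW_indep n hn)]
  simp
end

section
/- For all real numbers s, t with s ≠ 0 and t ≠ 0, and for every p ∈ V, the linear map A_{s,t,p} := s·q(p)·id + (s−t)·K_p on Λ²V* satisfies A_{1/s,1/t,p} ∘ A_{s,t,p} = q(p)² · id. -/
noncomputable section

/-- The principal symbol `K_p` of the operator `Q²` acting on bilinear forms:
`(K_p Y)(u,w) = g(p,u)·Y(w,p) − g(p,w)·Y(u,p)`. -/
def Kmap {V : Type*} [AddCommGroup V] [Module ℝ V]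
    (g : V →ₗ[ℝ] V →ₗ[ℝ] ℝ) (p : V) :
    (V →ₗ[ℝ] V →ₗ[ℝ] ℝ) →ₗ[ℝ] (V →ₗ[ℝ] V →ₗ[ℝ] ℝ) where
  toFun Y := LinearMap.mk₂ ℝ (fun u w => g p u * Y w p - g p w * Y u p)
    (fun u₁ u₂ w => by simp; ring)
    (fun c u w => by simp; ring)
    (fun u w₁ w₂ => by simp; ring)
    (fun c u w => by simp; ring)
  map_add' Y₁ Y₂ := by ext u w; simp; ring
  map_smul' c Y := by ext u w; simp; ring

/-- The map `A_{s,t,p} = s·q(p)·id + (s−t)·K_p` on bilinear forms. -/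
def Amap {V : Type*} [AddCommGroup V] [Module ℝ V]
    (g : V →ₗ[ℝ] V →ₗ[ℝ] ℝ) (p : V) (s t : ℝ) :
    (V →ₗ[ℝ] V →ₗ[ℝ] ℝ) →ₗ[ℝ] (V →ₗ[ℝ] V →ₗ[ℝ] ℝ) :=
  (s * g p p) • LinearMap.id + (s - t) • Kmap g p

/-- For `s, t ≠ 0` the composite `A_{1/s,1/t,p} ∘ A_{s,t,p}` equals `q(p)²·id`
on the space `Λ²V*` of alternating bilinear forms. -/
theorem Amap_inv_comp_Amap {V : Type*} [AddCommGroup V] [Module ℝ V]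
    [FiniteDimensional ℝ V] (n : ℕ) (hn : 3 ≤ n)
    (hdim : Module.finrank ℝ V = n)
    (g : V →ₗ[ℝ] V →ₗ[ℝ] ℝ)
    (hsymm : ∀ u w : V, g u w = g w u)
    (hnondeg : ∀ v : V, (∀ w : V, g v w = 0) → v = 0)
    (s t : ℝ) (hs : s ≠ 0) (ht : t ≠ 0) (p : V)
    (Y : V →ₗ[ℝ] V →ₗ[ℝ] ℝ) (hY : ∀ v : V, Y v v = 0) :
    Amap g p (1/s) (1/t) (Amap g p s t Y) = (g p p)^2 • Y := by
  have hpp : Y p p = 0 := hY p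
  ext u w
  simp only [Amap, Kmap, LinearMap.add_apply, LinearMap.smul_apply, LinearMap.id_apply,
    LinearMap.coe_mk, AddHom.coe_mk, LinearMap.mk₂_apply, LinearMap.smul_apply,
    smul_eq_mul, LinearMap.add_apply, Pi.smul_apply]
  rw [hpp]
  field_simp
  ring
end
end

section
/- Let p ∈ V with q(p) ≠ 0. For real numbers s, t, the linear map A_{s,t,p} := s·q(p)·id + (s−t)·K_p on Λ²V* is invertible if and only if s ≠ 0 and t ≠ 0. -/
noncomputable section

/-- The subspace `Λ²V*` of alternating bilinear forms. -/
def Alt2 (V : Type*) [AddCommGroup V] [Module ℝ V] :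
    Submodule ℝ (V →ₗ[ℝ] V →ₗ[ℝ] ℝ) where
  carrier := {Y | ∀ v : V, Y v v = 0}
  zero_mem' := fun v => by simp
  add_mem' := by
    intro Y₁ Y₂ h₁ h₂ v
    simp [h₁ v, h₂ v]
  smul_mem' := by
    intro c Y h v
    simp [h v]

lemma Amap_mapsTo {V : Type*} [AddCommGroup V] [Module ℝ V]
    (g : V →ₗ[ℝ] V →ₗ[ℝ] ℝ) (p : V) (s t : ℝ) :
    ∀ Y ∈ Alt2 V, Amap g p s t Y ∈ Alt2 V := by
  intro Y hY v
  simp only [Amap, Kmap, LinearMap.add_apply, LinearMap.smul_apply, LinearMap.id_apply,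
    LinearMap.coe_mk, AddHom.coe_mk, LinearMap.mk₂_apply, smul_eq_mul]
  rw [hY v]
  ring

/-- wedge of the covectors `g a` and `g b`. -/
def wedge {V : Type*} [AddCommGroup V] [Module ℝ V]
    (g : V →ₗ[ℝ] V →ₗ[ℝ] ℝ) (a b : V) : V →ₗ[ℝ] V →ₗ[ℝ] ℝ :=
  LinearMap.mk₂ ℝ (fun u w => g a u * g b w - g a w * g b u)
    (fun u₁ u₂ w => by simp; ring)
    (fun c u w => by simp; ring)
    (fun u w₁ w₂ => by simp; ring)
    (fun c u w => by simp; ring)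

lemma wedge_mem_Alt2 {V : Type*} [AddCommGroup V] [Module ℝ V]
    (g : V →ₗ[ℝ] V →ₗ[ℝ] ℝ) (a b : V) : wedge g a b ∈ Alt2 V := by
  intro v
  simp [wedge]

/-- There are two "independent" vectors orthogonal to `p`. -/
lemma exists_perp_pair {V : Type*} [AddCommGroup V] [Module ℝ V]
    [FiniteDimensional ℝ V] (n : ℕ) (hn : 3 ≤ n)
    (hdim : Module.finrank ℝ V = n)
    (g : V →ₗ[ℝ] V →ₗ[ℝ] ℝ) (p : V) :
    ∃ a b : V, g p a = 0 ∧ g p b = 0 ∧ a ≠ 0 ∧ b ∉ Submodule.span ℝ {a} := by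
  set W := LinearMap.ker (g p) with hW
  have h1 : Module.finrank ℝ (LinearMap.range (g p)) ≤ 1 := by
    have := Submodule.finrank_le (LinearMap.range (g p))
    simpa using this
  have h2 : Module.finrank ℝ (LinearMap.range (g p)) + Module.finrank ℝ W = n := by
    rw [hW, LinearMap.finrank_range_add_finrank_ker, hdim]
  have hW2 : 2 ≤ Module.finrank ℝ W := by omega
  obtain ⟨a, haW, ha0⟩ : ∃ a ∈ W, a ≠ 0 := by
    have hpos : 0 < Module.finrank ℝ W := by omega
    rw [Module.finrank_pos_iff] at hpos
    obtain ⟨⟨a, haW⟩, ha⟩ := exists_ne (0 : W)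
    exact ⟨a, haW, by simpa [Subtype.ext_iff] using ha⟩
  have hnotle : ¬ (W ≤ Submodule.span ℝ {a}) := by
    intro hle
    have := Submodule.finrank_mono hle
    rw [finrank_span_singleton ha0] at this
    omega
  obtain ⟨b, hbW, hbspan⟩ := SetLike.not_le_iff_exists.mp hnotle
  exact ⟨a, b, haW, hbW, ha0, hbspan⟩

set_option maxHeartbeats 1000000 in
/-- For a non-null `p` (`q(p) ≠ 0`), the map `A_{s,t,p} = s·q(p)·id + (s−t)·K_p`
on `Λ²V*` is invertible if and only if `s ≠ 0` and `t ≠ 0`. -/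
theorem Amap_bijective_iff {V : Type*} [AddCommGroup V] [Module ℝ V]
    [FiniteDimensional ℝ V] (n : ℕ) (hn : 3 ≤ n)
    (hdim : Module.finrank ℝ V = n)
    (g : V →ₗ[ℝ] V →ₗ[ℝ] ℝ)
    (hsymm : ∀ u w : V, g u w = g w u)
    (hnondeg : ∀ v : V, (∀ w : V, g v w = 0) → v = 0)
    (p : V) (hq : g p p ≠ 0) (s t : ℝ) :
    Function.Bijective ((Amap g p s t).restrict (Amap_mapsTo g p s t)) ↔
      (s ≠ 0 ∧ t ≠ 0) := by
  constructor
  · intro hbij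
    have key : ∀ Y : V →ₗ[ℝ] V →ₗ[ℝ] ℝ, Y ∈ Alt2 V → Amap g p s t Y = 0 → Y = 0 := by
      intro Y hY h0
      have hz : ((Amap g p s t).restrict (Amap_mapsTo g p s t)) ⟨Y, hY⟩ =
          ((Amap g p s t).restrict (Amap_mapsTo g p s t)) 0 := by
        apply Subtype.ext
        simp [LinearMap.restrict_apply, h0]
      have := hbij.1 hz
      simpa [Subtype.ext_iff] using this
    obtain ⟨a, b, hpa, hpb, ha0, hbspan⟩ := exists_perp_pair n hn hdim g p
    have hap : g a p = 0 := (hsymm a p).trans hpa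
    have hbp : g b p = 0 := (hsymm b p).trans hpb
    constructor
    · intro hs
      have hY0 : Amap g p s t (wedge g a b) = 0 := by
        ext u w
        simp [Amap, Kmap, wedge, hs, hap, hbp]
      have hweq := key _ (wedge_mem_Alt2 g a b) hY0
      obtain ⟨u₀, hu₀⟩ : ∃ u, g a u ≠ 0 := by
        by_contra hc; push_neg at hc; exact ha0 (hnondeg a hc)
      apply hbspan
      rw [Submodule.mem_span_singleton]
      refine ⟨g b u₀ / g a u₀, ?_⟩
      have hw : ∀ w, g (g a u₀ • b - g b u₀ • a) w = 0 := by
        intro w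
        have h1 : g a u₀ * g b w - g a w * g b u₀ = 0 := by
          have := congrArg (fun Z : V →ₗ[ℝ] V →ₗ[ℝ] ℝ => Z u₀ w) hweq
          simpa [wedge] using this
        simp only [map_sub, map_smul, LinearMap.sub_apply, LinearMap.smul_apply,
          smul_eq_mul]
        linarith [h1]
      have hzero := hnondeg _ hw
      rw [sub_eq_zero] at hzero
      rw [div_eq_inv_mul, ← smul_smul, ← hzero, inv_smul_smul₀ hu₀]
    · intro ht
      have hY0 : Amap g p s t (wedge g p a) = 0 := by
        ext u w
        simp [Amap, Kmap, wedge, ht, hap]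
        ring
      have hweq := key _ (wedge_mem_Alt2 g p a) hY0
      obtain ⟨w₀, hw₀⟩ : ∃ w, g a w ≠ 0 := by
        by_contra hc; push_neg at hc; exact ha0 (hnondeg a hc)
      have := congrArg (fun Z : V →ₗ[ℝ] V →ₗ[ℝ] ℝ => Z p w₀) hweq
      simp only [wedge, LinearMap.mk₂_apply, LinearMap.zero_apply, hap, mul_zero,
        sub_zero] at this
      exact hw₀ ((mul_eq_zero.mp this).resolve_left hq)
  · rintro ⟨hs, ht⟩
    have Aapp : ∀ (Z : V →ₗ[ℝ] V →ₗ[ℝ] ℝ) (u w : V),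
        Amap g p s t Z u w = s * g p p * Z u w + (s - t) * (g p u * Z w p - g p w * Z u p) := by
      intro Z u w
      simp only [Amap, Kmap, LinearMap.add_apply, LinearMap.smul_apply, LinearMap.id_apply,
        LinearMap.coe_mk, AddHom.coe_mk, LinearMap.mk₂_apply, smul_eq_mul]
    have Mapp : ∀ (Z : V →ₗ[ℝ] V →ₗ[ℝ] ℝ) (u w : V),
        ((1/(s * g p p)) • (LinearMap.id : (V →ₗ[ℝ] V →ₗ[ℝ] ℝ) →ₗ[ℝ] (V →ₗ[ℝ] V →ₗ[ℝ] ℝ))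
            + (-(s-t)/(s*t*(g p p)^2)) • Kmap g p) Z u w
          = (1/(s * g p p)) * Z u w
            + (-(s-t)/(s*t*(g p p)^2)) * (g p u * Z w p - g p w * Z u p) := by
      intro Z u w
      simp only [Kmap, LinearMap.add_apply, LinearMap.smul_apply, LinearMap.id_apply,
        LinearMap.coe_mk, AddHom.coe_mk, LinearMap.mk₂_apply, smul_eq_mul]
    have hM : ∀ Y ∈ Alt2 V,
        ((1/(s * g p p)) • (LinearMap.id : (V →ₗ[ℝ] V →ₗ[ℝ] ℝ) →ₗ[ℝ] (V →ₗ[ℝ] V →ₗ[ℝ] ℝ))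
            + (-(s-t)/(s*t*(g p p)^2)) • Kmap g p) Y ∈ Alt2 V := by
      intro Y hY v
      rw [Mapp, hY v]
      ring
    rw [Function.bijective_iff_has_inverse]
    refine ⟨((1/(s * g p p)) • (LinearMap.id : (V →ₗ[ℝ] V →ₗ[ℝ] ℝ) →ₗ[ℝ] (V →ₗ[ℝ] V →ₗ[ℝ] ℝ))
        + (-(s-t)/(s*t*(g p p)^2)) • Kmap g p).restrict hM, ?_, ?_⟩
    · intro Y
      apply Subtype.ext
      have hYpp : Y.1 p p = 0 := Y.2 p
      simp only [LinearMap.restrict_coe_apply]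
      ext u w
      rw [Mapp, Aapp, Aapp, Aapp, hYpp]
      field_simp
      ring
    · intro Y
      apply Subtype.ext
      have hYpp : Y.1 p p = 0 := Y.2 p
      simp only [LinearMap.restrict_coe_apply]
      ext u w
      rw [Aapp, Mapp, Mapp, Mapp, hYpp]
      field_simp
      ring
end
end
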